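/- arXiv:2012.10713 — 2 statements merged into one kernel-verified Lean document; each statement's English description precedes it below -/
import Mathlib

section
/- Let y, a ∈ ℝ^d be nonzero, Σ positive definite, and λ ≥ 0. The minimum of λ⟨a,Va⟩ − ⟨y,Vy⟩ over symmetric V with 0 ⪯ V ⪯ Σ equals ½[ λ⟨a,Σa⟩ − ⟨y,Σy⟩ − √( (λ⟨a,Σa⟩ + ⟨y,Σy⟩)² − 4λ⟨a,Σy⟩² ) ]. -/
/-!
Write `A = ⟨a, S a⟩`, `B = ⟨y, S y⟩`, `C = ⟨a, S y⟩` for the Gram matrix of `a, y` in the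
`S`-inner product. The claimed minimum `μ` is the smaller root of
`t² - (l A - B) t + l (C² - A B)`, the characteristic polynomial of `l a'a'ᵀ - y'y'ᵀ` on the span
of `a' = S^{1/2} a`, `y' = S^{1/2} y`.

Lower bound: `S = V + (S - V)` splits the Gram matrix into two positive semidefinite `2 × 2`
Gram matrices, and Cauchy–Schwarz in each, combined by AM-GM, gives `μ ≤ l ⟨a, V a⟩ - ⟨y, V y⟩`.
Attainment: take for `V` the `S`-orthogonal projection onto the eigenvector
`w = l C • a + (μ - l A) • y`.
-/

open Matrix

/-- The smaller eigenvalue of `l a aᵀ - y yᵀ` on `span {a, y}` when `a, y` have Gram matrix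
`!![A, C; C, B]`. -/
noncomputable def minEigenvalueRankTwo (l A B C : ℝ) : ℝ :=
  1 / 2 * (l * A - B - √((l * A + B) ^ 2 - 4 * l * C ^ 2))

theorem minEigenvalueRankTwo_le {l P Q R P' Q' R' : ℝ} (hl : 0 ≤ l)
    (hP : 0 ≤ P) (hQ : 0 ≤ Q) (hR : R ^ 2 ≤ P * Q)
    (hP' : 0 ≤ P') (hQ' : 0 ≤ Q') (hR' : R' ^ 2 ≤ P' * Q') :
    minEigenvalueRankTwo l (P + P') (Q + Q') (R + R') ≤ l * P - Q := by
  have hcross : 2 * (l * (R * R')) ≤ l ^ 2 * (P * P') + Q * Q' := by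
    have hsq : (l * (R * R')) ^ 2 ≤ (l ^ 2 * (P * P')) * (Q * Q') :=
      calc (l * (R * R')) ^ 2 = l ^ 2 * (R ^ 2 * R' ^ 2) := by ring
        _ ≤ l ^ 2 * ((P * Q) * (P' * Q')) := by gcongr
        _ = (l ^ 2 * (P * P')) * (Q * Q') := by ring
    nlinarith [sq_nonneg (l ^ 2 * (P * P') - Q * Q'),
      mul_nonneg (mul_nonneg (sq_nonneg l) hP) hP', mul_nonneg hQ hQ']
  -- the difference of the two sides is `4 ((l P + Q') (l P' + Q) - l (R + R')²)`
  have hdiff : (l * P' - Q' - (l * P - Q)) ^ 2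
      ≤ (l * (P + P') + (Q + Q')) ^ 2 - 4 * l * (R + R') ^ 2 := by
    nlinarith [mul_nonneg hl (sub_nonneg.2 hR), mul_nonneg hl (sub_nonneg.2 hR')]
  unfold minEigenvalueRankTwo
  linarith [(abs_le.1 (Real.abs_le_sqrt hdiff)).2]

theorem minEigenvalueRankTwo_nonpos {l A B C : ℝ} (hl : 0 ≤ l) (hA : 0 ≤ A) (hB : 0 ≤ B)
    (hC : C ^ 2 ≤ A * B) : minEigenvalueRankTwo l A B C ≤ 0 := by
  simpa using minEigenvalueRankTwo_le (R := 0) hl le_rfl le_rfl (by simp) hA hB hC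

theorem minEigenvalueRankTwo_isRoot {l A B C : ℝ} (hl : 0 ≤ l) (hC : C ^ 2 ≤ A * B) :
    minEigenvalueRankTwo l A B C ^ 2 - (l * A - B) * minEigenvalueRankTwo l A B C
      + l * (C ^ 2 - A * B) = 0 := by
  have hdisc : 0 ≤ (l * A + B) ^ 2 - 4 * l * C ^ 2 := by
    nlinarith [sq_nonneg (l * A - B), mul_nonneg hl (sub_nonneg.2 hC)]
  unfold minEigenvalueRankTwo
  linear_combination (1 / 4 : ℝ) * Real.sq_sqrt hdisc

namespace Matrix

variable {n : Type*}

theorem PosSemidef.isSymm {M : Matrix n n ℝ} (hM : M.PosSemidef) : M.IsSymm :=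
  isHermitian_iff_isSymm.1 hM.isHermitian

variable [Fintype n]

theorem IsSymm.dotProduct_mulVec_comm {M : Matrix n n ℝ} (hM : M.IsSymm) (x z : n → ℝ) :
    x ⬝ᵥ M *ᵥ z = z ⬝ᵥ M *ᵥ x := by
  rw [dotProduct_mulVec, ← mulVec_transpose, hM.eq, dotProduct_comm]

namespace PosSemidef

variable {M : Matrix n n ℝ}

theorem dotProduct_mulVec_self_nonneg (hM : M.PosSemidef) (x : n → ℝ) :
    0 ≤ x ⬝ᵥ M *ᵥ x := by
  simpa using hM.dotProduct_mulVec_nonneg x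

theorem dotProduct_mulVec_sq_le (hM : M.PosSemidef) (x z : n → ℝ) :
    (x ⬝ᵥ M *ᵥ z) ^ 2 ≤ (x ⬝ᵥ M *ᵥ x) * (z ⬝ᵥ M *ᵥ z) := by
  classical
  have hsymm : (toLinearMap₂' ℝ M).IsSymm := ⟨fun x z => by
    simpa only [toLinearMap₂'_apply', RingHom.id_apply] using hM.isSymm.dotProduct_mulVec_comm x z⟩
  simpa only [toLinearMap₂'_apply'] using
    LinearMap.BilinForm.apply_sq_le_of_symm (toLinearMap₂' ℝ M)
      (by simpa only [toLinearMap₂'_apply'] using hM.dotProduct_mulVec_self_nonneg) hsymm x z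

end PosSemidef

/-- In the coordinates `x ↦ S^{1/2} x`, the orthogonal projection onto `S^{1/2} w`
(and `0` when `⟨w, S w⟩ = 0`, since then the inverse is `0`). -/
noncomputable def rankOneProj (S : Matrix n n ℝ) (w : n → ℝ) : Matrix n n ℝ :=
  (w ⬝ᵥ S *ᵥ w)⁻¹ • vecMulVec (S *ᵥ w) (S *ᵥ w)

theorem dotProduct_rankOneProj_mulVec (S : Matrix n n ℝ) (w x z : n → ℝ) :
    x ⬝ᵥ S.rankOneProj w *ᵥ z = (x ⬝ᵥ S *ᵥ w) * (z ⬝ᵥ S *ᵥ w) / (w ⬝ᵥ S *ᵥ w) := by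
  simp only [rankOneProj, smul_mulVec, vecMulVec_mulVec, dotProduct_smul]
  simp [dotProduct_comm z, div_eq_inv_mul, mul_comm]

variable {S : Matrix n n ℝ}

theorem posSemidef_rankOneProj (hS : S.PosSemidef) (w : n → ℝ) :
    (S.rankOneProj w).PosSemidef := by
  simpa [rankOneProj] using (posSemidef_vecMulVec_self_star (S *ᵥ w)).smul
    (inv_nonneg.2 (hS.dotProduct_mulVec_self_nonneg w))

theorem posSemidef_sub_rankOneProj (hS : S.PosSemidef) (w : n → ℝ) :
    (S - S.rankOneProj w).PosSemidef := by
  refine .of_dotProduct_mulVec_nonneg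
    (hS.isHermitian.sub (posSemidef_rankOneProj hS w).isHermitian) fun x => ?_
  rw [star_trivial, sub_mulVec, dotProduct_sub, dotProduct_rankOneProj_mulVec, ← sq,
    sub_nonneg]
  exact div_le_of_le_mul₀ (hS.dotProduct_mulVec_self_nonneg w)
    (hS.dotProduct_mulVec_self_nonneg x) (hS.dotProduct_mulVec_sq_le x w)

variable (a y : n → ℝ) {l : ℝ}

theorem minEigenvalueRankTwo_le_of_posSemidef {V W : Matrix n n ℝ} (hV : V.PosSemidef)
    (hW : W.PosSemidef) (hl : 0 ≤ l) :
    minEigenvalueRankTwo l (a ⬝ᵥ (V + W) *ᵥ a) (y ⬝ᵥ (V + W) *ᵥ y) (a ⬝ᵥ (V + W) *ᵥ y)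
      ≤ l * (a ⬝ᵥ V *ᵥ a) - y ⬝ᵥ V *ᵥ y := by
  simp only [add_mulVec, dotProduct_add]
  exact minEigenvalueRankTwo_le hl
    (hV.dotProduct_mulVec_self_nonneg a) (hV.dotProduct_mulVec_self_nonneg y)
    (hV.dotProduct_mulVec_sq_le a y)
    (hW.dotProduct_mulVec_self_nonneg a) (hW.dotProduct_mulVec_self_nonneg y)
    (hW.dotProduct_mulVec_sq_le a y)

theorem exists_posSemidef_eq_minEigenvalueRankTwo (hS : S.PosSemidef) (hl : 0 ≤ l) :
    ∃ V : Matrix n n ℝ, V.PosSemidef ∧ (S - V).PosSemidef ∧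
      l * (a ⬝ᵥ V *ᵥ a) - y ⬝ᵥ V *ᵥ y
        = minEigenvalueRankTwo l (a ⬝ᵥ S *ᵥ a) (y ⬝ᵥ S *ᵥ y) (a ⬝ᵥ S *ᵥ y) := by
  set A := a ⬝ᵥ S *ᵥ a
  set B := y ⬝ᵥ S *ᵥ y
  set C := a ⬝ᵥ S *ᵥ y
  set μ := minEigenvalueRankTwo l A B C
  have hA : 0 ≤ A := hS.dotProduct_mulVec_self_nonneg a
  have hB : 0 ≤ B := hS.dotProduct_mulVec_self_nonneg y
  have hCAB : C ^ 2 ≤ A * B := hS.dotProduct_mulVec_sq_le a y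
  have hμ : μ ≤ 0 := minEigenvalueRankTwo_nonpos hl hA hB hCAB
  have hroot := minEigenvalueRankTwo_isRoot hl hCAB
  set w := (l * C) • a + (μ - l * A) • y
  have hSw : S *ᵥ w = (l * C) • S *ᵥ a + (μ - l * A) • S *ᵥ y := by
    simp only [w, mulVec_add, mulVec_smul]
  have haw : a ⬝ᵥ S *ᵥ w = μ * C := by
    simp only [hSw, dotProduct_add, dotProduct_smul, smul_eq_mul]
    ring
  have hyw : y ⬝ᵥ S *ᵥ w = μ * (l * A - μ) := by
    simp only [hSw, dotProduct_add, dotProduct_smul, smul_eq_mul,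
      hS.isSymm.dotProduct_mulVec_comm y a]
    linear_combination hroot
  have hww : w ⬝ᵥ S *ᵥ w = μ * (l * C ^ 2 - (l * A - μ) ^ 2) := by
    simp only [w, add_dotProduct, smul_dotProduct, smul_eq_mul, haw, hyw]
    ring
  refine ⟨S.rankOneProj w, posSemidef_rankOneProj hS w, posSemidef_sub_rankOneProj hS w, ?_⟩
  rw [dotProduct_rankOneProj_mulVec, dotProduct_rankOneProj_mulVec, haw, hyw]
  rcases eq_or_ne (w ⬝ᵥ S *ᵥ w) 0 with hK | hK
  · have hyw_sq : (μ * (l * A - μ)) ^ 2 ≤ 0 := by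
      simpa [hyw, hK] using hS.dotProduct_mulVec_sq_le y w
    have hyw_zero : μ * (l * A - μ) = 0 :=
      pow_eq_zero_iff two_ne_zero |>.1 (le_antisymm hyw_sq (sq_nonneg _))
    have hμ0 : μ = 0 := by nlinarith [mul_nonneg hl hA]
    simp [hμ0]
  · rw [mul_div_assoc', ← sub_div, div_eq_iff hK, hww]
    ring

end Matrix

theorem sdp_lagrangian_min_general {d : ℕ} (y a : Fin d → ℝ)
    (l : ℝ) (hl : 0 ≤ l)
    (S : Matrix (Fin d) (Fin d) ℝ) (hS : S.PosDef) :
    IsLeast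
      {x : ℝ | ∃ V : Matrix (Fin d) (Fin d) ℝ,
        V.PosSemidef ∧ (S - V).PosSemidef ∧
        x = l * (a ⬝ᵥ V.mulVec a) - y ⬝ᵥ V.mulVec y}
      ((1 / 2) * (l * (a ⬝ᵥ S.mulVec a) - y ⬝ᵥ S.mulVec y
        - Real.sqrt ((l * (a ⬝ᵥ S.mulVec a) + y ⬝ᵥ S.mulVec y) ^ 2
            - 4 * l * (a ⬝ᵥ S.mulVec y) ^ 2))) := by
  change IsLeast _ (minEigenvalueRankTwo l (a ⬝ᵥ S *ᵥ a) (y ⬝ᵥ S *ᵥ y) (a ⬝ᵥ S *ᵥ y))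
  refine ⟨?_, ?_⟩
  · obtain ⟨V, hV, hSV, hval⟩ := exists_posSemidef_eq_minEigenvalueRankTwo a y hS.posSemidef hl
    exact ⟨V, hV, hSV, hval.symm⟩
  · rintro x ⟨V, hV, hSV, rfl⟩
    simpa only [add_sub_cancel] using minEigenvalueRankTwo_le_of_posSemidef a y hV hSV hl

/-- The minimum of `λ⟨a,Va⟩ − ⟨y,Vy⟩` over `0 ⪯ V ⪯ Σ` equals
`½(λ⟨a,Σa⟩ − ⟨y,Σy⟩ − √((λ⟨a,Σa⟩ + ⟨y,Σy⟩)² − 4λ⟨a,Σy⟩²))`. -/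
theorem sdp_lagrangian_min {d : ℕ} (y a : Fin d → ℝ)
    (hy : y ≠ 0) (ha : a ≠ 0) (l : ℝ) (hl : 0 ≤ l)
    (S : Matrix (Fin d) (Fin d) ℝ) (hS : S.PosDef) :
    IsLeast
      {x : ℝ | ∃ V : Matrix (Fin d) (Fin d) ℝ,
        V.PosSemidef ∧ (S - V).PosSemidef ∧
        x = l * (a ⬝ᵥ V.mulVec a) - y ⬝ᵥ V.mulVec y}
      ((1 / 2) * (l * (a ⬝ᵥ S.mulVec a) - y ⬝ᵥ S.mulVec y
        - Real.sqrt ((l * (a ⬝ᵥ S.mulVec a) + y ⬝ᵥ S.mulVec y) ^ 2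
            - 4 * l * (a ⬝ᵥ S.mulVec y) ^ 2))) :=
  sdp_lagrangian_min_general y a l hl S hS
end

section
/- Let f, g be square-integrable random variables with Var g > 0, and let Z be a random variable such that Var E[g|Z] = Var g. Then Var E[f|Z] ≥ Cov(f,g)²/Var g. -/
open MeasureTheory ProbabilityTheory Real

/-- Variance of the conditional expectation `Var E[f | Z]`. -/
noncomputable def condVarExp {Ω γ : Type*} [MeasurableSpace Ω] [MeasurableSpace γ]
    (μ : Measure Ω) (f : Ω → ℝ) (Z : Ω → γ) : ℝ :=
  ProbabilityTheory.variance (μ[f | MeasurableSpace.comap Z inferInstance]) μ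

/-- Covariance `Cov(f,g)`. -/
noncomputable def cov {Ω : Type*} [MeasurableSpace Ω] (μ : Measure Ω) (f g : Ω → ℝ) : ℝ :=
  ∫ ω, (f ω - ∫ x, f x ∂μ) * (g ω - ∫ x, g x ∂μ) ∂μ

/-!
Write `m` for the σ-algebra generated by `Z`. By the law of total variance,
`Var g = E[Var(g | m)] + Var E[g | m]`, so the hypothesis forces `E[(g - E[g | m])²] = 0`,
i.e. `g = E[g | m]` almost everywhere. Pulling out the `m`-measurable factor then gives
`Cov(f, g) = Cov(E[f | m], E[g | m])`, and the Cauchy–Schwarz inequality for covariances bounds its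
square by `Var E[f | m] · Var E[g | m] = Var E[f | m] · Var g`.
-/

namespace ProbabilityTheory

variable {Ω : Type*} {m m₀ : MeasurableSpace Ω} {μ : Measure[m₀] Ω} {X Y Y' : Ω → ℝ}

lemma covariance_congr_right (h : Y =ᵐ[μ] Y') : cov[X, Y; μ] = cov[X, Y'; μ] := by
  rw [covariance, covariance, integral_congr_ae h]
  exact integral_congr_ae (h.mono fun ω hω => by simp only [hω])

/-- The quadratic `t ↦ Var[X - t • Y]` is nonnegative, so its discriminant is nonpositive. -/
lemma covariance_sq_le_variance_mul_variance [IsFiniteMeasure μ]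
    (hX : MemLp X 2 μ) (hY : MemLp Y 2 μ) :
    cov[X, Y; μ] ^ 2 ≤ Var[X; μ] * Var[Y; μ] := by
  have hquad : ∀ t : ℝ, 0 ≤ Var[Y; μ] * (t * t) + (-2 * cov[X, Y; μ]) * t + Var[X; μ] := by
    intro t
    have h := variance_nonneg (X - t • Y) μ
    rw [variance_sub hX (hY.const_smul t), variance_smul, covariance_smul_right] at h
    linear_combination h
  have h := discrim_le_zero hquad
  rw [discrim] at h
  linarith

lemma ae_eq_condExp_of_variance_condExp_eq (hm : m ≤ m₀) [IsProbabilityMeasure μ]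
    (hX : MemLp X 2 μ) (h : Var[μ[X | m]; μ] = Var[X; μ]) : X =ᵐ[μ] μ[X | m] := by
  have hzero : μ[(X - μ[X | m]) ^ 2] = 0 := by
    have htotal := integral_condVar_add_variance_condExp hm hX
    rw [condVar, integral_condExp hm] at htotal
    linarith
  have hint : Integrable ((X - μ[X | m]) ^ 2) μ := (hX.sub (hX.condExp one_le_two)).integrable_sq
  filter_upwards [(integral_eq_zero_iff_of_nonneg (fun ω => sq_nonneg _) hint).mp hzero]
    with ω hω
  simpa [sub_eq_zero] using hω

lemma covariance_condExp_left_of_stronglyMeasurable (hm : m ≤ m₀) [IsProbabilityMeasure μ]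
    (hX : MemLp X 2 μ) (hY : MemLp Y 2 μ) (hYm : StronglyMeasurable[m] Y) :
    cov[μ[X | m], Y; μ] = cov[X, Y; μ] := by
  rw [covariance_eq_sub (hX.condExp one_le_two) hY, covariance_eq_sub hX hY, integral_condExp hm]
  have hpull : μ[X * Y | m] =ᵐ[μ] μ[X | m] * Y :=
    condExp_mul_of_stronglyMeasurable_right hYm (hX.integrable_mul hY) (hX.integrable one_le_two)
  rw [← integral_congr_ae hpull, integral_condExp hm]

theorem sq_covariance_div_variance_le_variance_condExp [IsProbabilityMeasure μ]
    (hX : MemLp X 2 μ) (hY : MemLp Y 2 μ) (hYv : 0 < Var[Y; μ])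
    (h : Var[μ[Y | m]; μ] = Var[Y; μ]) :
    cov[X, Y; μ] ^ 2 / Var[Y; μ] ≤ Var[μ[X | m]; μ] := by
  by_cases hm : m ≤ m₀
  swap
  · rw [condExp_of_not_le hm, variance_zero] at h
    exact absurd h.symm hYv.ne'
  have hcov : cov[X, Y; μ] = cov[μ[X | m], μ[Y | m]; μ] := by
    rw [covariance_condExp_left_of_stronglyMeasurable hm hX (hY.condExp one_le_two)
      stronglyMeasurable_condExp]
    exact covariance_congr_right (ae_eq_condExp_of_variance_condExp_eq hm hY h)
  rw [div_le_iff₀ hYv, hcov, ← h]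
  exact covariance_sq_le_variance_mul_variance (hX.condExp one_le_two) (hY.condExp one_le_two)

end ProbabilityTheory

/-- If `Var E[g|Z] = Var g` then `Var E[f|Z] ≥ Cov(f,g)²/Var g`. -/
theorem condVarExp_lower_of_sufficiency
    {Ω γ : Type*} [MeasurableSpace Ω] [MeasurableSpace γ]
    (μ : Measure Ω) [IsProbabilityMeasure μ]
    (f g : Ω → ℝ) (hf : MemLp f 2 μ) (hg : MemLp g 2 μ)
    (hgv : 0 < variance g μ) (Z : Ω → γ)
    (hZ : condVarExp μ g Z = variance g μ) :
    (cov μ f g) ^ 2 / variance g μ ≤ condVarExp μ f Z :=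
  sq_covariance_div_variance_le_variance_condExp hf hg hgv hZ
end
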